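/- arXiv:1909.06898 — 3 statements merged into one kernel-verified Lean document; each statement's English description precedes it below -/
import Mathlib

section
/- The kernel of φ_{λ,μ} is exactly the left ideal of A generated by the two operators S_x − S_{λ,μ}^{λ} and S_y − S_{λ,μ}^{μ}. -/
open Polynomial BigOperators

noncomputable section

/-- The shift automorphism `X ↦ X + 1` of a polynomial ring. -/
def shiftPoly (A : Type*) [CommRing A] : Polynomial A ≃ₐ[A] Polynomial A :=
  AlgEquiv.ofAlgHom (aeval (X + 1)) (aeval (X - 1))
    (by apply algHom_ext; simp) (by apply algHom_ext; simp)

variable (K : Type*) [Field K] [CharZero K]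

/-- `K[x,y]` modelled as `K[x][y]`: the inner variable is `x`, the outer one is `y`. -/
abbrev Rxy := Polynomial (Polynomial K)

/-- The rational function field `K(x,y)`, as the fraction field of `K[x][y]`. -/
abbrev Fxy := FractionRing (Rxy K)

/-- The shift `x ↦ x + 1` on `K[x]`. -/
def σxK : RingAut (Polynomial K) := (shiftPoly K).toRingEquiv

/-- The shift `x ↦ x + 1` on `K[x,y]`. -/
def σxR : RingAut (Rxy K) := mapEquiv (shiftPoly K).toRingEquiv

/-- The shift `y ↦ y + 1` on `K[x,y]`. -/
def σyR : RingAut (Rxy K) := (shiftPoly (Polynomial K)).toRingEquiv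

/-- The shift `σ_x` on `K(x,y)`. -/
def σxF : RingAut (Fxy K) := IsFractionRing.ringEquivOfRingEquiv (σxR K)

/-- The shift `σ_y` on `K(x,y)`. -/
def σyF : RingAut (Fxy K) := IsFractionRing.ringEquivOfRingEquiv (σyR K)

/-- The canonical map `K[x,y] → K(x,y)`. -/
def ι₀ : Rxy K →+* Fxy K := algebraMap (Rxy K) (Fxy K)

/-- The canonical map `K[x] → K(x,y)`. -/
def ιx₀ : Polynomial K →+* Fxy K := (ι₀ K).comp (Polynomial.C : Polynomial K →+* Rxy K)

/-- The canonical map `K → K(x,y)`. -/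
def ιK : K →+* Fxy K := (ιx₀ K).comp (Polynomial.C : K →+* Polynomial K)

/-- The element `x` of `K(x,y)`. -/
def xF : Fxy K := ιx₀ K X

/-- The element `y` of `K(x,y)`. -/
def yF : Fxy K := ι₀ K X

/-- A rational function `f ∈ K(x,y)` is `σ_y`-summable if `f = σ_y(g) - g`
for some `g ∈ K(x,y)`. -/
def IsSummableY (f : Fxy K) : Prop := ∃ g : Fxy K, f = σyF K g - g

/-- The Laurent operator ring `A = K(x,y)[S_x,S_y,S_x⁻¹,S_y⁻¹]`, an operator being
recorded by its (finitely supported) family of coefficients `a_{ij}` in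
`L = Σ a_{ij} S_x^i S_y^j`. -/
abbrev OpA := (ℤ × ℤ) →₀ Fxy K

/-- The subring `A_{λ,μ} = K(x,y)[S_{λ,μ}, S_{λ,μ}⁻¹]`, an operator being recorded by its
(finitely supported) family of coefficients `a_i` in `M = Σ a_i S_{λ,μ}^i`. -/
abbrev OpB := ℤ →₀ Fxy K

/-- The automorphism `σ_x^i σ_y^j` of `K(x,y)` attached to the monomial `S_x^i S_y^j`. -/
def σv (v : ℤ × ℤ) : RingAut (Fxy K) := σxF K ^ v.1 * σyF K ^ v.2

/-- Multiplication in `A`, determined by the commutation rule `S_x^i S_y^j f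
= σ_x^i σ_y^j (f) S_x^i S_y^j`. -/
def mulA (L M : OpA K) : OpA K :=
  L.sum fun p a => M.sum fun q b => Finsupp.single (p + q) (a * σv K p b)

/-- The application of an operator `L = Σ a_{ij} S_x^i S_y^j ∈ A` to a rational function. -/
def applyA (L : OpA K) (f : Fxy K) : Fxy K := L.sum fun p a => a * σv K p f

/-- The operator `S_y - 1 ∈ A`. -/
def SyOne : OpA K :=
  Finsupp.single ((0 : ℤ), (1 : ℤ)) (1 : Fxy K) - Finsupp.single ((0 : ℤ), (0 : ℤ)) (1 : Fxy K)

section TypeLamMu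

/- `α`, `β` are the Bézout cofactors for the integer-linear type `(λ, μ)`,
so that `S_{λ,μ} = S_x^α S_y^β`. -/
variable (α β : ℤ)

/-- The automorphism `σ_{λ,μ} = σ_x^α σ_y^β` of `K(x,y)` attached to `S_{λ,μ} = S_x^α S_y^β`. -/
def τF : RingAut (Fxy K) := σxF K ^ α * σyF K ^ β

/-- Multiplication in `A_{λ,μ}`. -/
def mulB (L M : OpB K) : OpB K :=
  L.sum fun i a => M.sum fun j b => Finsupp.single (i + j) (a * (τF K α β ^ i) b)

/-- The application of an operator `M = Σ a_i S_{λ,μ}^i ∈ A_{λ,μ}` to a rational function. -/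
def applyB (M : OpB K) (f : Fxy K) : Fxy K := M.sum fun i a => a * (τF K α β ^ i) f

/-- The inclusion `A_{λ,μ} ⊆ A`, sending `S_{λ,μ}^k` to `S_x^{kα} S_y^{kβ}`. -/
def ιB (M : OpB K) : OpA K := Finsupp.mapDomain (fun k : ℤ => (k * α, k * β)) M

/-- The left `K(x,y)`-linear map `φ_{λ,μ} : A → A_{λ,μ}`,
sending `Σ a_{ij} S_x^i S_y^j` to `Σ a_{ij} S_{λ,μ}^{iλ+jμ}`. -/
def φB (lam μ : ℤ) (L : OpA K) : OpB K :=
  Finsupp.mapDomain (fun p : ℤ × ℤ => p.1 * lam + p.2 * μ) L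

/-- The left scalar multiplication `L ⊙ M = φ_{λ,μ}(L M)` of `L ∈ A` on `M ∈ A_{λ,μ}`. -/
def odot (lam μ : ℤ) (L : OpA K) (M : OpB K) : OpB K :=
  φB K lam μ (mulA K L (ιB K α β M))

end TypeLamMu

/-- The lowest order `lord(M)` of a (nonzero) operator `M ∈ A_{λ,μ}`. -/
def lord (M : OpB K) : ℤ := WithTop.untopD 0 (M.support.min)

/-- The highest order `hord(M)` of a (nonzero) operator `M ∈ A_{λ,μ}`. -/
def hord (M : OpB K) : ℤ := WithBot.unbotD 0 (M.support.max)

/-- The inclusion `K(x,y)[S_y, S_y⁻¹] ⊆ A`. -/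
def ιy (L : ℤ →₀ Fxy K) : OpA K := Finsupp.mapDomain (fun j : ℤ => ((0 : ℤ), j)) L

/-- The inclusion `K[x][S_x] ⊆ A`, for operators with polynomial coefficients
supported on nonnegative powers of `S_x`. -/
def ιxOp (L : ℕ →₀ Polynomial K) : OpA K :=
  L.sum fun ℓ c => Finsupp.single ((ℓ : ℤ), (0 : ℤ)) (ιx₀ K c)

/-- A nonzero operator `L = Σ c_ℓ S_x^ℓ ∈ K[x][S_x]` is a telescoper for `f ∈ K(x,y)`
if `L(f)` is `σ_y`-summable. -/
def IsTelescoper (L : ℕ →₀ Polynomial K) (f : Fxy K) : Prop :=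
  L ≠ 0 ∧ IsSummableY K (applyA K (ιxOp K L) f)

/-- The degree in `x` of a polynomial in `K[x,y] = K[x][y]`. -/
def degX (r : Rxy K) : ℕ := r.support.sup fun n => (r.coeff n).natDegree

/-- The total degree in `x, y` of a polynomial in `K[x,y] = K[x][y]`. -/
def degXY (r : Rxy K) : ℕ := r.support.sup fun n => n + (r.coeff n).natDegree

end

/-! `φ_{λ,μ}` is induced by the weight `w(i, j) = iλ + jμ` on exponents, and since `αλ + βμ = 1`
the monomials `S_{λ,μ}^λ`, `S_{λ,μ}^μ` have the weights `λ`, `μ` of `S_x`, `S_y`; so both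
generators lie in the kernel. Conversely, if `φ_{λ,μ}(L) = 0` then
`L = Σ_p a_p (S^p - S_{λ,μ}^{w(p)})`, and the exponent difference `p - w(p)(α, β)` is
`p₁ v₁ + p₂ v₂`, where `v₁ = (1, 0) - λ(α, β)` and `v₂ = (0, 1) - μ(α, β)` are the exponent
differences of the two generators. Translating the exponent of a monomial by `v₁` or `v₂`
changes it by a left multiple of a generator, hence so does translation by any vector of the
lattice they span.
-/

namespace Finsupp

variable {G R : Type*} [AddCommGroup G] [AddCommGroup R]

def singleShiftSubgroup (H : AddSubgroup (G →₀ R)) : AddSubgroup G where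
  carrier := {v | ∀ c a, single (c + v) a - single c a ∈ H}
  zero_mem' := by simp
  add_mem' {v w} hv hw c a := by
    simpa [add_assoc] using add_mem (hw (c + v) a) (hv c a)
  neg_mem' {v} hv c a := by
    simpa using neg_mem (hv (c + -v) a)

theorem singleShiftSubgroup_mono {H H' : AddSubgroup (G →₀ R)} (h : H ≤ H') :
    singleShiftSubgroup H ≤ singleShiftSubgroup H' :=
  fun _ hv c a => h (hv c a)

theorem sub_mapDomain_mem {H : AddSubgroup (G →₀ R)} {f : G → G}
    (hf : ∀ p, p - f p ∈ singleShiftSubgroup H) (L : G →₀ R) : L - mapDomain f L ∈ H := by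
  have hL : L - mapDomain f L = L.sum fun p a => single p a - single (f p) a := by
    rw [sum_sub, sum_single, mapDomain]
  rw [hL]
  refine AddSubmonoidClass.finsuppSum_mem _ _ _ fun p _ => ?_
  simpa using hf p (f p) (L p)

end Finsupp

section OperatorIdeal

variable {K : Type*} [Field K]

open Finsupp

theorem mulA_zero_left (M : OpA K) : mulA K 0 M = 0 :=
  sum_zero_index

theorem mulA_add_left (P P' M : OpA K) :
    mulA K (P + P') M = mulA K P M + mulA K P' M := by
  refine sum_add_index' (fun _ => by simp) fun p a a' => ?_
  simp only [add_mul, single_add]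
  exact sum_add

noncomputable def mulARight (M : OpA K) : OpA K →+ OpA K :=
  AddMonoidHom.mk' (fun P => mulA K P M) (mulA_add_left · · M)

theorem mulA_single_sub_single (p s s' : ℤ × ℤ) (a : Fxy K) :
    mulA K (single p a) (single s 1 - single s' 1)
      = single (p + s) a - single (p + s') a := by
  rw [mulA, sum_single_index (by simp),
    sum_sub_index fun q b₁ b₂ => by rw [map_sub, mul_sub, single_sub],
    sum_single_index (by simp), sum_single_index (by simp)]
  simp

theorem sub_mem_singleShiftSubgroup (s s' : ℤ × ℤ) :
    s - s' ∈ singleShiftSubgroup (mulARight (K := K) (single s 1 - single s' 1)).range := by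
  intro c a
  refine ⟨single (c - s') a, ?_⟩
  simp only [mulARight, AddMonoidHom.mk'_apply, mulA_single_sub_single]
  congr 2 <;> abel

theorem φB_mulA_single_sub_single {lam μ : ℤ} {s s' : ℤ × ℤ}
    (hs : s.1 * lam + s.2 * μ = s'.1 * lam + s'.2 * μ) (P : OpA K) :
    φB K lam μ (mulA K P (single s 1 - single s' 1)) = 0 := by
  induction P using Finsupp.induction_linear with
  | zero => rw [mulA_zero_left, φB, mapDomain_zero]
  | add P Q hP hQ => rw [mulA_add_left, φB, mapDomain_add, ← φB, ← φB, hP, hQ, add_zero]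
  | single p a =>
    rw [mulA_single_sub_single, φB, mapDomain_sub, mapDomain_single, mapDomain_single, sub_eq_zero]
    congr 1
    simp only [Prod.fst_add, Prod.snd_add]
    linear_combination hs

theorem ιB_single (α β t : ℤ) (a : Fxy K) :
    ιB K α β (single t a) = single (t * α, t * β) a :=
  mapDomain_single

theorem ιB_φB (lam μ α β : ℤ) (L : OpA K) :
    ιB K α β (φB K lam μ L)
      = mapDomain (fun p : ℤ × ℤ => ((p.1 * lam + p.2 * μ) * α, (p.1 * lam + p.2 * μ) * β)) L := by
  rw [ιB, φB, ← mapDomain_comp]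
  rfl

theorem sub_weight_smul_eq (lam μ α β : ℤ) (p : ℤ × ℤ) :
    p - ((p.1 * lam + p.2 * μ) * α, (p.1 * lam + p.2 * μ) * β)
      = p.1 • ((1, 0) - (lam * α, lam * β)) + p.2 • ((0, 1) - (μ * α, μ * β)) := by
  ext <;> simp only [Prod.fst_sub, Prod.snd_sub, Prod.mk_sub_mk, Prod.smul_mk, Prod.mk_add_mk,
    smul_eq_mul] <;> ring

theorem mem_sup_range_mulARight_of_φB_eq_zero {lam μ : ℤ} (α β : ℤ) {L : OpA K}
    (hL : φB K lam μ L = 0) :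
    L ∈ (mulARight (single (1, 0) 1 - single (lam * α, lam * β) 1)).range ⊔
      (mulARight (single (0, 1) 1 - single (μ * α, μ * β) 1)).range := by
  set G₁ : OpA K := single (1, 0) 1 - single (lam * α, lam * β) 1
  set G₂ : OpA K := single (0, 1) 1 - single (μ * α, μ * β) 1
  have hv₁ := singleShiftSubgroup_mono (le_sup_left (b := (mulARight G₂).range))
    (sub_mem_singleShiftSubgroup (1, 0) (lam * α, lam * β))
  have hv₂ := singleShiftSubgroup_mono (le_sup_right (a := (mulARight G₁).range))
    (sub_mem_singleShiftSubgroup (0, 1) (μ * α, μ * β))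
  have h := sub_mapDomain_mem
    (fun p => sub_weight_smul_eq lam μ α β p ▸ add_mem (zsmul_mem hv₁ p.1) (zsmul_mem hv₂ p.2)) L
  rwa [← ιB_φB, hL, ιB, mapDomain_zero, sub_zero] at h

end OperatorIdeal

theorem statement2_general (K : Type*) [Field K]
    (lam μ α β : ℤ)
    (hbez : α * lam + β * μ = 1)
    (L : OpA K) :
    φB K lam μ L = 0 ↔
      ∃ P Q : OpA K,
        L = mulA K P (Finsupp.single ((1 : ℤ), (0 : ℤ)) (1 : Fxy K) -
              ιB K α β (Finsupp.single lam (1 : Fxy K))) +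
            mulA K Q (Finsupp.single ((0 : ℤ), (1 : ℤ)) (1 : Fxy K) -
              ιB K α β (Finsupp.single μ (1 : Fxy K))) := by
  simp only [ιB_single]
  constructor
  · intro hL
    obtain ⟨_, ⟨P, rfl⟩, _, ⟨Q, rfl⟩, hPQ⟩ :=
      AddSubgroup.mem_sup.mp (mem_sup_range_mulARight_of_φB_eq_zero α β hL)
    exact ⟨P, Q, hPQ.symm⟩
  · rintro ⟨P, Q, rfl⟩
    rw [φB, Finsupp.mapDomain_add, ← φB, ← φB,
      φB_mulA_single_sub_single (by linear_combination -lam * hbez),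
      φB_mulA_single_sub_single (by linear_combination -μ * hbez), add_zero]

/-- Proposition `PROP:kernel`.
The kernel of `φ_{λ,μ}` is exactly the left ideal of `A` generated by the two operators
`S_x − S_{λ,μ}^λ` and `S_y − S_{λ,μ}^μ`; that is, `φ_{λ,μ}(L) = 0` if and only if
`L = P (S_x − S_{λ,μ}^λ) + Q (S_y − S_{λ,μ}^μ)` for some `P, Q ∈ A`. -/
theorem statement2 (K : Type*) [Field K] [CharZero K]
    (lam μ α β : ℤ) (hμ : 0 < μ) (hcop : IsCoprime lam μ)
    (hbez : α * lam + β * μ = 1) (hα : 0 ≤ α ∧ α < μ)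
    (hβ : lam ≠ 0 → |β| ≤ |lam|) (hβ0 : lam = 0 → α = 0 ∧ β = 1)
    (L : OpA K) :
    φB K lam μ L = 0 ↔
      ∃ P Q : OpA K,
        L = mulA K P (Finsupp.single ((1 : ℤ), (0 : ℤ)) (1 : Fxy K) -
              ιB K α β (Finsupp.single lam (1 : Fxy K))) +
            mulA K Q (Finsupp.single ((0 : ℤ), (1 : ℤ)) (1 : Fxy K) -
              ιB K α β (Finsupp.single μ (1 : Fxy K))) :=
  statement2_general K lam μ α β hbez L
end

section
/- Let L ∈ K(x,y)[S_y, S_y^{-1}] be a nonzero operator and M ∈ A_{λ,μ}. Then there exist unique Q, R ∈ A_{λ,μ} such that M = L ⊙ Q + R, and R either is zero or satisfies lord(φ_{λ,μ}(L)) ≤ lord(R) ≤ hord(R) < hord(φ_{λ,μ}(L)). -/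
open Polynomial BigOperators

/-!
The operator `L ⊙ Q` only sees `L` through the twisted action
`Q ↦ Σ_j L_j σ_y^j(Q) S_{λ,μ}^{jμ}`, since `S_y^j S_{λ,μ}^k` is sent by `φ_{λ,μ}` to
`S_{λ,μ}^{k + jμ}` (because `αλ + βμ = 1`). For `Q ≠ 0` its extreme coefficients sit at
`hord Q + μ hord L` and `lord Q + μ lord L` and are nonzero, so `L ⊙ Q` is spread over a range
of length at least `μ (hord L - lord L)`, which cannot fit into the remainder window
`[μ lord L, μ hord L)`: this gives uniqueness. For existence, a monomial `b S^n` outside the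
window is rewritten, using the extreme term of `L ⊙ (c S^k)` for a suitable `c`, as an element
of the image plus monomials strictly closer to the window.
-/

noncomputable section

open Finsupp

namespace Finsupp

section Order

variable {R : Type*} [Zero R] {M : ℤ →₀ R} {n : ℤ}

def lowOrder (M : ℤ →₀ R) : ℤ := WithTop.untopD 0 M.support.min

def highOrder (M : ℤ →₀ R) : ℤ := WithBot.unbotD 0 M.support.max

theorem isLeast_lowOrder (hM : M ≠ 0) : IsLeast ↑M.support M.lowOrder := by
  have hne : M.support.Nonempty := support_nonempty_iff.2 hM
  rw [lowOrder, ← Finset.coe_min' hne, WithTop.untopD_coe]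
  exact Finset.isLeast_min' _ hne

theorem isGreatest_highOrder (hM : M ≠ 0) : IsGreatest ↑M.support M.highOrder := by
  have hne : M.support.Nonempty := support_nonempty_iff.2 hM
  rw [highOrder, ← Finset.coe_max' hne, WithBot.unbotD_coe]
  exact Finset.isGreatest_max' _ hne

theorem ne_zero_of_mem_support (h : n ∈ M.support) : M ≠ 0 :=
  support_nonempty_iff.1 ⟨n, h⟩

theorem lowOrder_mem_support (hM : M ≠ 0) : M.lowOrder ∈ M.support :=
  (isLeast_lowOrder hM).1

theorem highOrder_mem_support (hM : M ≠ 0) : M.highOrder ∈ M.support :=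
  (isGreatest_highOrder hM).1

theorem lowOrder_le (h : n ∈ M.support) : M.lowOrder ≤ n :=
  (isLeast_lowOrder (ne_zero_of_mem_support h)).2 h

theorem le_highOrder (h : n ∈ M.support) : n ≤ M.highOrder :=
  (isGreatest_highOrder (ne_zero_of_mem_support h)).2 h

theorem apply_eq_zero_of_lt_lowOrder (h : n < M.lowOrder) : M n = 0 :=
  notMem_support_iff.1 fun hn => (lowOrder_le hn).not_gt h

theorem apply_eq_zero_of_highOrder_lt (h : M.highOrder < n) : M n = 0 :=
  notMem_support_iff.1 fun hn => (le_highOrder hn).not_gt h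

theorem support_subset_Ico_iff {a b : ℤ} :
    ↑M.support ⊆ Set.Ico a b ↔
      M = 0 ∨ (a ≤ M.lowOrder ∧ M.lowOrder ≤ M.highOrder ∧ M.highOrder < b) := by
  constructor
  · intro h
    refine or_iff_not_imp_left.2 fun hM => ?_
    exact ⟨(h (lowOrder_mem_support hM)).1, le_highOrder (lowOrder_mem_support hM),
      (h (highOrder_mem_support hM)).2⟩
  · rintro (rfl | ⟨ha, -, hb⟩) m hm
    · simp at hm
    · exact ⟨ha.trans (lowOrder_le hm), (le_highOrder hm).trans_lt hb⟩

end Order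

variable {R : Type*} [AddCommMonoid R] {f : ℤ → ℤ} {M : ℤ →₀ R}

theorem lowOrder_mapDomain (hf : StrictMono f) (hM : M ≠ 0) :
    (mapDomain f M).lowOrder = f M.lowOrder := by
  classical
  have hfM : mapDomain f M ≠ 0 := by
    simpa [← support_nonempty_iff, mapDomain_support_of_injective hf.injective] using hM
  refine ((isLeast_lowOrder hfM).unique ?_)
  rw [mapDomain_support_of_injective hf.injective, Finset.coe_image, hf.map_isLeast]
  exact isLeast_lowOrder hM

theorem highOrder_mapDomain (hf : StrictMono f) (hM : M ≠ 0) :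
    (mapDomain f M).highOrder = f M.highOrder := by
  classical
  have hfM : mapDomain f M ≠ 0 := by
    simpa [← support_nonempty_iff, mapDomain_support_of_injective hf.injective] using hM
  refine ((isGreatest_highOrder hfM).unique ?_)
  rw [mapDomain_support_of_injective hf.injective, Finset.coe_image, hf.map_isGreatest]
  exact isGreatest_highOrder hM

end Finsupp

section SkewSMul

variable {F : Type*} [DivisionRing F] (σ : F ≃+* F) (μ : ℤ) (L : ℤ →₀ F)

def skewSMul : (ℤ →₀ F) →+ (ℤ →₀ F) where
  toFun Q := L.sum fun j a => Q.sum fun k b => single (k + j * μ) (a * (σ ^ j) b)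
  map_zero' := by simp
  map_add' Q Q' := by
    rw [← Finsupp.sum_add]
    exact sum_congr fun j _ => sum_add_index' (by simp) (by simp [mul_add, single_add])

def remainders : AddSubgroup (ℤ →₀ F) :=
  (supported F F (Set.Ico (L.lowOrder * μ) (L.highOrder * μ))).toAddSubgroup

theorem mem_remainders_iff {R : ℤ →₀ F} :
    R ∈ remainders μ L ↔
      R = 0 ∨ (L.lowOrder * μ ≤ R.lowOrder ∧ R.lowOrder ≤ R.highOrder ∧
        R.highOrder < L.highOrder * μ) := by
  rw [remainders, Submodule.mem_toAddSubgroup, mem_supported, support_subset_Ico_iff]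

theorem skewSMul_eq_sum (Q : ℤ →₀ F) :
    skewSMul σ μ L Q = L.sum fun j a => Q.sum fun k b => single (k + j * μ) (a * (σ ^ j) b) :=
  rfl

theorem skewSMul_single (k : ℤ) (c : F) :
    skewSMul σ μ L (single k c) = L.sum fun j a => single (k + j * μ) (a * (σ ^ j) c) :=
  (skewSMul_eq_sum σ μ L _).trans (sum_congr fun _ _ => sum_single_index (by simp))

theorem skewSMul_apply (Q : ℤ →₀ F) (n : ℤ) :
    skewSMul σ μ L Q n = ∑ j ∈ L.support, L j * (σ ^ j) (Q (n - j * μ)) := by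
  induction Q using Finsupp.induction_linear with
  | zero => simp
  | add Q Q' hQ hQ' => simp [hQ, hQ', mul_add, Finset.sum_add_distrib]
  | single k c =>
    rw [skewSMul_single, Finsupp.sum, Finset.sum_apply']
    refine Finset.sum_congr rfl fun j _ => ?_
    simp only [single_apply]
    split_ifs <;> first | (exfalso; omega) | simp

theorem skewSMul_apply_highOrder_add (hμ : 0 < μ) (P : ℤ →₀ F) :
    skewSMul σ μ L P (P.highOrder + L.highOrder * μ) =
      L L.highOrder * (σ ^ L.highOrder) (P P.highOrder) := by
  rw [skewSMul_apply, Finset.sum_eq_single L.highOrder]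
  · rw [add_sub_cancel_right]
  · intro j hj hne
    have hj : j * μ < L.highOrder * μ :=
      mul_lt_mul_of_pos_right ((le_highOrder hj).lt_of_ne hne) hμ
    have hP : P (P.highOrder + L.highOrder * μ - j * μ) = 0 :=
      apply_eq_zero_of_highOrder_lt (by omega)
    rw [hP, map_zero, mul_zero]
  · intro h
    rw [notMem_support_iff.1 h, zero_mul]

theorem skewSMul_apply_lowOrder_add (hμ : 0 < μ) (P : ℤ →₀ F) :
    skewSMul σ μ L P (P.lowOrder + L.lowOrder * μ) =
      L L.lowOrder * (σ ^ L.lowOrder) (P P.lowOrder) := by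
  rw [skewSMul_apply, Finset.sum_eq_single L.lowOrder]
  · rw [add_sub_cancel_right]
  · intro j hj hne
    have hj : L.lowOrder * μ < j * μ :=
      mul_lt_mul_of_pos_right ((lowOrder_le hj).lt_of_ne' hne) hμ
    have hP : P (P.lowOrder + L.lowOrder * μ - j * μ) = 0 :=
      apply_eq_zero_of_lt_lowOrder (by omega)
    rw [hP, map_zero, mul_zero]
  · intro h
    rw [notMem_support_iff.1 h, zero_mul]

variable {σ μ L}

theorem eq_zero_of_skewSMul_mem_remainders (hμ : 0 < μ) (hL : L ≠ 0) {P : ℤ →₀ F}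
    (h : skewSMul σ μ L P ∈ remainders μ L) : P = 0 := by
  by_contra hP
  have hsupp := (mem_supported F _).1 (Submodule.mem_toAddSubgroup _ |>.1 h)
  have htop : P.highOrder + L.highOrder * μ ∈ (skewSMul σ μ L P).support := by
    rw [Finsupp.mem_support_iff, skewSMul_apply_highOrder_add σ μ L hμ]
    exact mul_ne_zero (Finsupp.mem_support_iff.1 (highOrder_mem_support hL))
      ((_root_.map_ne_zero _).2 (Finsupp.mem_support_iff.1 (highOrder_mem_support hP)))
  have hbot : P.lowOrder + L.lowOrder * μ ∈ (skewSMul σ μ L P).support := by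
    rw [Finsupp.mem_support_iff, skewSMul_apply_lowOrder_add σ μ L hμ]
    exact mul_ne_zero (Finsupp.mem_support_iff.1 (lowOrder_mem_support hL))
      ((_root_.map_ne_zero _).2 (Finsupp.mem_support_iff.1 (lowOrder_mem_support hP)))
  have h₁ := (hsupp htop).2
  have h₂ := (hsupp hbot).1
  have h₃ := le_highOrder (lowOrder_mem_support hP)
  omega

theorem single_add_mul_mem_of_forall_ne {S : AddSubgroup (ℤ →₀ F)}
    (hS : (skewSMul σ μ L).range ≤ S) {j₀ : ℤ} (hj₀ : j₀ ∈ L.support) (k : ℤ)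
    (h : ∀ j ∈ L.support, j ≠ j₀ → ∀ b, single (k + j * μ) b ∈ S) (b : F) :
    single (k + j₀ * μ) b ∈ S := by
  classical
  set c := (σ ^ j₀).symm ((L j₀)⁻¹ * b)
  have hc : L j₀ * (σ ^ j₀) c = b := by
    simp [c, mul_inv_cancel_left₀ (Finsupp.mem_support_iff.1 hj₀)]
  have key : single (k + j₀ * μ) b = skewSMul σ μ L (single k c) -
      ∑ j ∈ L.support.erase j₀, single (k + j * μ) (L j * (σ ^ j) c) := by
    rw [skewSMul_single, Finsupp.sum, ← Finset.add_sum_erase _ _ hj₀, hc, add_sub_cancel_right]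
  rw [key]
  exact S.sub_mem (hS ⟨_, rfl⟩) (S.sum_mem fun j hj =>
    h j (Finset.mem_of_mem_erase hj) (Finset.ne_of_mem_erase hj) _)

theorem single_mem_range_sup_remainders (hμ : 0 < μ) (hL : L ≠ 0) (n : ℤ) (b : F) :
    single n b ∈ (skewSMul σ μ L).range ⊔ remainders μ L := by
  have hlo := lowOrder_mem_support hL
  have hhi := highOrder_mem_support hL
  -- In both recursive calls `h₁` and `h₂` place the new exponent strictly closer to the window,
  -- which is what `decreasing_by` needs.
  rcases lt_or_ge n (L.lowOrder * μ) with hn | hn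
  · have := single_add_mul_mem_of_forall_ne le_sup_left hlo (n - L.lowOrder * μ)
      (fun j hj hne b' => by
        have h₁ : L.lowOrder * μ < j * μ :=
          mul_lt_mul_of_pos_right ((lowOrder_le hj).lt_of_ne' hne) hμ
        have h₂ : j * μ ≤ L.highOrder * μ :=
          mul_le_mul_of_nonneg_right (le_highOrder hj) hμ.le
        exact single_mem_range_sup_remainders hμ hL _ b') b
    rwa [sub_add_cancel] at this
  rcases lt_or_ge n (L.highOrder * μ) with hn' | hn'
  · refine AddSubgroup.mem_sup_right ((mem_supported F _).2 fun m hm => ?_)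
    obtain rfl := Finset.mem_singleton.1 (support_single_subset hm)
    exact ⟨hn, hn'⟩
  · have := single_add_mul_mem_of_forall_ne le_sup_left hhi (n - L.highOrder * μ)
      (fun j hj hne b' => by
        have h₁ : j * μ < L.highOrder * μ :=
          mul_lt_mul_of_pos_right ((le_highOrder hj).lt_of_ne hne) hμ
        have h₂ : L.lowOrder * μ ≤ j * μ :=
          mul_le_mul_of_nonneg_right (lowOrder_le hj) hμ.le
        exact single_mem_range_sup_remainders hμ hL _ b') b
    rwa [sub_add_cancel] at this
termination_by (n - L.highOrder * μ + 1).toNat + (L.lowOrder * μ - n).toNat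
decreasing_by all_goals omega

theorem existsUnique_eq_skewSMul_add_mem_remainders (hμ : 0 < μ) (hL : L ≠ 0)
    (M : ℤ →₀ F) :
    ∃! QR : (ℤ →₀ F) × (ℤ →₀ F), M = skewSMul σ μ L QR.1 + QR.2 ∧ QR.2 ∈ remainders μ L := by
  have hM : M ∈ (skewSMul σ μ L).range ⊔ remainders μ L := by
    induction M using Finsupp.induction_linear with
    | zero => exact AddSubgroup.zero_mem _
    | add M M' hM hM' => exact AddSubgroup.add_mem _ hM hM'
    | single n b => exact single_mem_range_sup_remainders hμ hL n b
  obtain ⟨_, ⟨Q, rfl⟩, R, hR, hQR⟩ := AddSubgroup.mem_sup.1 hM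
  refine ⟨(Q, R), ⟨hQR.symm, hR⟩, ?_⟩
  rintro ⟨Q', R'⟩ ⟨hQR', hR'⟩
  dsimp only at hQR' hR'
  have hdiff : skewSMul σ μ L (Q' - Q) = R - R' := by
    rw [map_sub, sub_eq_sub_iff_add_eq_add, ← hQR', add_comm, hQR]
  have hQ : Q' = Q := sub_eq_zero.1 <|
    eq_zero_of_skewSMul_mem_remainders hμ hL (hdiff ▸ AddSubgroup.sub_mem _ hR hR')
  subst hQ
  rw [hQR'] at hQR
  rw [add_left_cancel hQR]

end SkewSMul

section Bridge

variable {K : Type*} [Field K]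

theorem lord_eq_lowOrder (M : OpB K) : lord K M = M.lowOrder := rfl

theorem hord_eq_highOrder (M : OpB K) : hord K M = M.highOrder := rfl

theorem φB_ιy (lam μ : ℤ) (L : ℤ →₀ Fxy K) :
    φB K lam μ (ιy K L) = mapDomain (· * μ) L := by
  rw [φB, ιy, ← mapDomain_comp]
  congr 1
  funext j
  simp

theorem mulA_ιy_ιB (α β : ℤ) (L : ℤ →₀ Fxy K) (Q : OpB K) :
    mulA K (ιy K L) (ιB K α β Q) =
      L.sum fun j a => Q.sum fun k b => single (k * α, j + k * β) (a * (σyF K ^ j) b) := by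
  rw [mulA, ιy, sum_mapDomain_index (by simp)
    (by intro p m1 m2; simp [add_mul, single_add, Finsupp.sum_add])]
  refine sum_congr fun j _ => ?_
  rw [ιB, sum_mapDomain_index (by simp)
    (by intro q m1 m2; simp [mul_add, map_add, single_add])]
  refine sum_congr fun k _ => ?_
  simp [σv]

theorem odot_ιy {lam μ α β : ℤ} (hbez : α * lam + β * μ = 1) (L : ℤ →₀ Fxy K) (Q : OpB K) :
    odot K α β lam μ (ιy K L) Q = skewSMul (σyF K) μ L Q := by
  rw [odot, mulA_ιy_ιB, φB, skewSMul_eq_sum, ← mapDomain.addMonoidHom_apply (M := Fxy K),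
    map_finsuppSum]
  refine sum_congr fun j _ => ?_
  rw [map_finsuppSum]
  refine sum_congr fun k _ => ?_
  rw [mapDomain.addMonoidHom_apply, mapDomain_single]
  congr 1
  linear_combination k * hbez

end Bridge

theorem statement5_general (K : Type*) [Field K]
    (lam μ α β : ℤ) (hμ : 0 < μ)
    (hbez : α * lam + β * μ = 1)
    (L : ℤ →₀ Fxy K) (hL : L ≠ 0) (M : OpB K) :
    ∃! QR : OpB K × OpB K,
      M = odot K α β lam μ (ιy K L) QR.1 + QR.2 ∧
        (QR.2 = 0 ∨
          (lord K (φB K lam μ (ιy K L)) ≤ lord K QR.2 ∧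
            lord K QR.2 ≤ hord K QR.2 ∧
            hord K QR.2 < hord K (φB K lam μ (ιy K L)))) := by
  have hmono : StrictMono (· * μ : ℤ → ℤ) := strictMono_mul_right_of_pos hμ
  simp only [odot_ιy hbez, lord_eq_lowOrder, hord_eq_highOrder, φB_ιy,
    lowOrder_mapDomain hmono hL, highOrder_mapDomain hmono hL, ← mem_remainders_iff]
  exact existsUnique_eq_skewSMul_add_mem_remainders hμ hL M

/-- Theorem `THM:leftquorem`.
Let `L ∈ K(x,y)[S_y, S_y⁻¹]` be a nonzero operator and `M ∈ A_{λ,μ}`.  Then there exist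
unique `Q, R ∈ A_{λ,μ}` such that `M = L ⊙ Q + R`, and `R` either is zero or satisfies
`lord(φ_{λ,μ}(L)) ≤ lord(R) ≤ hord(R) < hord(φ_{λ,μ}(L))`. -/
theorem statement5 (K : Type*) [Field K] [CharZero K]
    (lam μ α β : ℤ) (hμ : 0 < μ) (hcop : IsCoprime lam μ)
    (hbez : α * lam + β * μ = 1) (hα : 0 ≤ α ∧ α < μ)
    (hβ : lam ≠ 0 → |β| ≤ |lam|) (hβ0 : lam = 0 → α = 0 ∧ β = 1)
    (L : ℤ →₀ Fxy K) (hL : L ≠ 0) (M : OpB K) :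
    ∃! QR : OpB K × OpB K,
      M = odot K α β lam μ (ιy K L) QR.1 + QR.2 ∧
        (QR.2 = 0 ∨
          (lord K (φB K lam μ (ιy K L)) ≤ lord K QR.2 ∧
            lord K QR.2 ≤ hord K QR.2 ∧
            hord K QR.2 < hord K (φB K lam μ (ιy K L)))) :=
  statement5_general K lam μ α β hμ hbez L hL M
end
end

section
/- Let f ∈ K(x,y) have the form f = M(1/p(λx + μy)^k), where (λ,μ) is a pair of coprime integers with μ > 0, k is a positive integer, p ∈ K[z] is monic and irreducible, and M = Σ_{i ∈ Z} a_i S_{λ,μ}^i with a_i ∈ K(x)[y], finitely many nonzero, and deg_y(a_i) < deg_z(p). Let L ∈ K[x][S_x] be a nonzero operator. Then L is a telescoper for f if and only if there exists Q ∈ A_{λ,μ} such that L ⊙ M = (S_y − 1) ⊙ Q; and when this is the case, Q(1/p(λx + μy)^k) is a certificate corresponding to L. -/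
open Polynomial BigOperators

/-!
Write `q_c = p(λx + μy + c)` and `G_c = 1/q_c^k`. Since `S_{λ,μ}` shifts `λx + μy` by
`αλ + βμ = 1`, every `P ∈ A_{λ,μ}` acts by `P(G_0) = Σ_j P_j G_j`, and `L(f) = (L ⊙ M)(G_0)`;
applied to `L ⊙ M = (S_y - 1) ⊙ Q` this gives the certificate. Conversely, since
`(S_y - 1) ⊙ a S_{λ,μ}^j = σ_y(a) S_{λ,μ}^{j+μ} - a S_{λ,μ}^j`, modulo `(S_y - 1) ⊙ A_{λ,μ}` every
`P` reduces to an operator `R` supported in `[0, μ)`, with proper coefficients if `P` has them,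
and it remains to see that `R(G_0)` summable forces `R = 0`. The `q_c` are pairwise distinct
primes of `K[x,y]` (images of `p(x + c)` under a unimodular change of variables) with
`σ_y q_c = q_{c+μ}`. A nonzero proper term `R_r G_r` has a pole at `q_r` and at no other `q_c`, so
for `r₀` in the support of `R`, `R(G_0)` has a pole at `q_{r₀}` and at no other point of the orbit
`q_{r₀ + ℤμ}`; a difference `σ_y h - h` cannot, because `h` has only finitely many poles.
-/

noncomputable section

section Generic

lemma RingAut.zpow_apply_of_apply_eq {R : Type*} [Semiring R] (s : RingAut R) (F : ℤ → R) (t : ℤ)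
    (h : ∀ c, s (F c) = F (c + t)) (n c : ℤ) : (s ^ n) (F c) = F (c + n * t) := by
  have hinv : ∀ c, s⁻¹ (F c) = F (c - t) := fun c => by
    rw [RingAut.inv_apply, RingEquiv.symm_apply_eq, h, sub_add_cancel]
  induction n using Int.induction_on generalizing c with
  | zero => simp
  | succ n ih => rw [zpow_add_one, RingAut.mul_apply, h, ih]; ring_nf
  | pred n ih => rw [zpow_sub_one, RingAut.mul_apply, hinv, ih]; ring_nf

def RingAut.preserving {R β : Type*} [Semiring R] (f : R → β) : Subgroup (RingAut R) where
  carrier := {φ | ∀ a, f (φ a) = f a}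
  mul_mem' hφ hψ a := (hφ _).trans (hψ a)
  one_mem' _ := rfl
  inv_mem' {φ} hφ a := by simpa using (hφ (φ⁻¹ a)).symm

lemma UniqueFactorizationMonoid.finite_setOf_dvd {R ι : Type*} [CommMonoidWithZero R]
    [UniqueFactorizationMonoid R] {f : ι → R} (hf : ∀ i, Irreducible (f i))
    (hinj : ∀ i j, f i ∣ f j → i = j) {b : R} (hb : b ≠ 0) : {i | f i ∣ b}.Finite := by
  classical
  have key : ∀ i ∈ {i | f i ∣ b}, ∃ t ∈ (UniqueFactorizationMonoid.factors b).toFinset,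
      Associated (f i) t := fun i hi => by
    obtain ⟨t, ht, hassoc⟩ := UniqueFactorizationMonoid.exists_mem_factors_of_dvd hb (hf i) hi
    exact ⟨t, Multiset.mem_toFinset.mpr ht, hassoc⟩
  choose! g hg hassoc using key
  refine Set.Finite.of_injOn (f := g) (fun i hi => hg i hi) (fun i hi j hj hij => ?_)
    (Finset.finite_toSet _)
  exact hinj i j ((hassoc i hi).trans (hij ▸ (hassoc j hj).symm)).dvd

/-- Away from `c = 0` the condition `h ∈ V c` is invariant under `c ↦ c - 1`; since it fails for
only finitely many `c`, it holds at `0` and at `-1`, hence `σ h - h ∈ V 0`. -/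
lemma mem_zero_of_eq_apply_sub {F : Type*} [AddCommGroup F] (V : ℤ → AddSubgroup F)
    (σ : F → F) (hσ : ∀ c h, σ h ∈ V (c + 1) ↔ h ∈ V c) (hfin : ∀ h, {c | h ∉ V c}.Finite)
    {w h : F} (hw : ∀ c ≠ 0, w ∈ V c) (hwh : w = σ h - h) : w ∈ V 0 := by
  have step : ∀ c ≠ 0, h ∈ V c ↔ h ∈ V (c - 1) := fun c hc => by
    rw [← hσ (c - 1), sub_add_cancel, eq_sub_iff_add_eq.mp hwh |>.symm,
      AddSubgroup.add_mem_cancel_left _ (hw c hc)]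
  have not_forall_notMem : ∀ g : ℕ → ℤ, Function.Injective g → ¬ ∀ n, h ∉ V (g n) :=
    fun g hg hn => Set.infinite_of_injective_forall_mem hg hn (hfin h)
  have h0 : h ∈ V 0 := by
    by_contra h0
    refine not_forall_notMem (fun n => n) Nat.cast_injective fun n => ?_
    induction n with
    | zero => exact h0
    | succ n ih => rwa [step _ (by omega), Nat.cast_succ, add_sub_cancel_right]
  have h1 : h ∈ V (-1) := by
    by_contra h1
    refine not_forall_notMem (fun n => -1 - n) (fun m n hmn => by simpa using hmn) fun n => ?_
    induction n with
    | zero => simpa using h1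
    | succ n ih => rwa [Nat.cast_succ, ← sub_sub, ← step _ (by omega)]
  rw [hwh]
  exact sub_mem ((hσ (-1) h).mpr h1) h0

lemma Finsupp.sum_single_apply_mem {α β N M : Type*} [Zero N] [AddCommGroup M]
    {S : AddSubgroup M} (P : α →₀ N) (f : α → β) (g : α → N → M)
    (hg : ∀ a ∈ P.support, g a (P a) ∈ S) (r : β) :
    (P.sum fun a n => Finsupp.single (f a) (g a n)) r ∈ S := by
  classical
  rw [Finsupp.sum_apply]
  refine sum_mem fun a ha => ?_
  dsimp only
  rw [Finsupp.single_apply]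
  split_ifs
  exacts [hg a ha, zero_mem S]

lemma Finsupp.mapDomain_apply_mem {α β M : Type*} [AddCommGroup M] {S : AddSubgroup M}
    {P : α →₀ M} (f : α → β) (hP : ∀ a, P a ∈ S) (r : β) : Finsupp.mapDomain f P r ∈ S :=
  Finsupp.sum_single_apply_mem P f (fun _ n => n) (fun a _ => hP a) r

lemma Polynomial.natDegree_eq_zero_of_taylor_eq_self {R : Type*} [CommRing R] [IsDomain R]
    [CharZero R] {f : R[X]} {a : R} (ha : a ≠ 0) (h : taylor a f = f) : f.natDegree = 0 := by
  have periodic : ∀ n : ℕ, f.eval (n * a) = f.eval 0 := by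
    intro n
    induction n with
    | zero => simp
    | succ n ih => rw [Nat.cast_succ, add_one_mul, ← taylor_eval, h, ih]
  have hconst : f = C (f.eval 0) := eq_of_infinite_eval_eq _ _ <|
    Set.infinite_of_injective_forall_mem (f := fun n : ℕ => (n : R) * a)
      (fun m n hmn => by exact_mod_cast mul_right_cancel₀ ha hmn) (fun n => by simp [periodic])
  rw [hconst, natDegree_C]

end Generic

section RegularAt

variable {A F : Type*} [CommRing A] [Field F] [Algebra A F] [IsFractionRing A F]

/-- The localization of `A` at the prime `(q)`, as an additive subgroup of `F`. -/
def regularAt {q : A} (hq : Prime q) : AddSubgroup F where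
  carrier := {h | ∃ a b : A, ¬ q ∣ b ∧ h = algebraMap A F a / algebraMap A F b}
  zero_mem' := ⟨0, 1, hq.not_dvd_one, by simp⟩
  add_mem' := by
    rintro _ _ ⟨a, b, hb, rfl⟩ ⟨a', b', hb', rfl⟩
    have ne_zero : ∀ {b : A}, ¬ q ∣ b → algebraMap A F b ≠ 0 := fun hb => by
      rw [map_ne_zero_iff _ (IsFractionRing.injective A F)]; rintro rfl; exact hb (dvd_zero q)
    refine ⟨a * b' + b * a', b * b', fun h => (hq.dvd_or_dvd h).elim hb hb', ?_⟩
    rw [div_add_div _ _ (ne_zero hb) (ne_zero hb')]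
    simp only [map_add, map_mul]
  neg_mem' := by
    rintro _ ⟨a, b, hb, rfl⟩
    exact ⟨-a, b, hb, by rw [map_neg, neg_div]⟩

variable {q : A} (hq : Prime q)

lemma div_mem_regularAt {a b : A} (hb : ¬ q ∣ b) :
    algebraMap A F a / algebraMap A F b ∈ regularAt hq := ⟨a, b, hb, rfl⟩

lemma div_mul_pow_notMem_regularAt [IsDomain A] {a b : A} (ha : ¬ q ∣ a) (hb : b ≠ 0) {k : ℕ}
    (hk : 0 < k) :
    algebraMap A F a / algebraMap A F (b * q ^ k) ∉ regularAt hq := by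
  rintro ⟨a', b', hb', heq⟩
  have hb'0 : b' ≠ 0 := by rintro rfl; exact hb' (dvd_zero q)
  have hinj := IsFractionRing.injective A F
  rw [div_eq_div_iff ((map_ne_zero_iff _ hinj).mpr (mul_ne_zero hb (pow_ne_zero k hq.ne_zero)))
    ((map_ne_zero_iff _ hinj).mpr hb'0), ← map_mul, ← map_mul] at heq
  have hdvd : q ∣ a * b' := by
    rw [hinj heq]; exact ((dvd_pow_self q hk.ne').mul_left b).mul_left a'
  exact (hq.dvd_or_dvd hdvd).elim ha hb'

lemma map_mem_regularAt (e : A ≃+* A) {q' : A} (hq' : Prime q') (he : e q = q') {h : F}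
    (hh : h ∈ regularAt hq) :
    (IsFractionRing.ringEquivOfRingEquiv e : F ≃+* F) h ∈ regularAt hq' := by
  obtain ⟨a, b, hb, rfl⟩ := hh
  refine ⟨e a, e b, he ▸ (map_dvd_iff e).not.mpr hb, ?_⟩
  rw [map_div₀, IsFractionRing.ringEquivOfRingEquiv_algebraMap,
    IsFractionRing.ringEquivOfRingEquiv_algebraMap]

lemma map_mem_regularAt_iff (e : A ≃+* A) {q' : A} (hq' : Prime q') (he : e q = q') (h : F) :
    (IsFractionRing.ringEquivOfRingEquiv e : F ≃+* F) h ∈ regularAt hq' ↔ h ∈ regularAt hq := by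
  refine ⟨fun hh => ?_, map_mem_regularAt hq e hq' he⟩
  have := map_mem_regularAt hq' e.symm hq (by rw [← he, RingEquiv.symm_apply_apply]) hh
  rwa [← IsFractionRing.ringEquivOfRingEquiv_symm, RingEquiv.symm_apply_apply] at this

end RegularAt

section Shifts

variable (K : Type*) [Field K]

lemma shiftPoly_apply {A : Type*} [CommRing A] (a : A[X]) : shiftPoly A a = taylor 1 a := by
  rw [taylor_apply, comp_eq_aeval, map_one]; rfl

lemma σxK_X : σxK K X = X + 1 := by simp [σxK, shiftPoly_apply]

lemma σxR_C (u : K[X]) : σxR K (C u) = C (σxK K u) := by simp [σxR, σxK]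

lemma σxR_X : σxR K X = X := by simp [σxR]

lemma σyR_apply (a : Rxy K) : σyR K a = taylor 1 a := shiftPoly_apply a

lemma σyR_C (u : K[X]) : σyR K (C u) = C u := by simp [σyR_apply]

lemma σyR_X : σyR K X = X + 1 := by simp [σyR_apply]

lemma commute_σxR_σyR : Commute (σxR K) (σyR K) := by
  refine RingEquiv.toRingHom_injective (Polynomial.ringHom_ext (fun u => ?_) ?_)
  · simp [σyR_C, σxR_C]
  · simp [σyR_X, σxR_X]

def σR (v : ℤ × ℤ) : RingAut (Rxy K) := σxR K ^ v.1 * σyR K ^ v.2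

lemma σv_eq (v : ℤ × ℤ) :
    σv K v = IsFractionRing.ringEquivOfRingEquivHom (Rxy K) (Fxy K) (σR K v) := by
  rw [σR, map_mul, map_zpow, map_zpow]; rfl

lemma σv_ι₀ (v : ℤ × ℤ) (a : Rxy K) : σv K v (ι₀ K a) = ι₀ K (σR K v a) := by
  rw [σv_eq]; exact IsFractionRing.ringEquivOfRingEquiv_algebraMap _ a

lemma σv_add (v w : ℤ × ℤ) : σv K (v + w) = σv K v * σv K w := by
  simp only [σv_eq, ← map_mul, σR, Prod.fst_add, Prod.snd_add, zpow_add, mul_assoc]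
  rw [((commute_σxR_σyR K).zpow_zpow w.1 v.2).left_comm]

lemma σv_zero_fst (n : ℤ) : σv K (0, n) = σyF K ^ n := by
  rw [σv, zpow_zero, one_mul]

lemma τF_zpow (α β i : ℤ) : τF K α β ^ i = σv K (i * α, i * β) := by
  rw [show τF K α β = σv K (α, β) from rfl, σv_eq, σv_eq, ← map_zpow, σR, σR,
    ((commute_σxR_σyR K).zpow_zpow α β).mul_zpow, ← zpow_mul, ← zpow_mul, mul_comm α, mul_comm β]

lemma degree_σR (v : ℤ × ℤ) (a : Rxy K) : (σR K v a).degree = a.degree := by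
  suffices σR K v ∈ RingAut.preserving (degree : Rxy K → WithBot ℕ) from this a
  refine mul_mem (zpow_mem (fun a => ?_) _) (zpow_mem (fun a => ?_) _)
  · exact degree_map_eq_of_injective (σxK K).injective a
  · rw [σyR_apply, degree_taylor]

end Shifts

section Primes

variable (K : Type*) [Field K] (lam μ : ℤ) (p : K[X])

def zR (c : ℤ) : Rxy K := C (μ : K[X]) * X + C ((lam : K[X]) * X + (c : K[X]))

def qR (c : ℤ) : Rxy K := aeval (zR K lam μ c) p

lemma map_aeval_of_commutes {R S : Type*} [CommSemiring R] [CommSemiring S] [Algebra R S]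
    (φ : S ≃+* S) (hφ : ∀ t, φ (algebraMap R S t) = algebraMap R S t) (z : S) (q : R[X]) :
    φ (aeval z q) = aeval (φ z) q :=
  (aeval_algHom_apply (AlgEquiv.ofRingEquiv hφ) z q).symm

lemma σxR_zR (c : ℤ) : σxR K (zR K lam μ c) = zR K lam μ (c + lam) := by
  simp only [zR, map_add, map_mul, σxR_C, map_intCast, σxR_X, σxK_X, map_one]
  push_cast; ring

lemma σyR_zR (c : ℤ) : σyR K (zR K lam μ c) = zR K lam μ (c + μ) := by
  simp only [zR, map_add, map_mul, σyR_C, σyR_X, Int.cast_add]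
  ring

lemma σxR_qR (c : ℤ) : σxR K (qR K lam μ p c) = qR K lam μ p (c + lam) := by
  rw [qR, qR, map_aeval_of_commutes (R := K) _ (fun t => by simp [σxR_C, σxK, shiftPoly_apply]),
    σxR_zR]

lemma σyR_qR (c : ℤ) : σyR K (qR K lam μ p c) = qR K lam μ p (c + μ) := by
  rw [qR, qR, map_aeval_of_commutes (R := K) _ (fun t => by simp [σyR_C]), σyR_zR]

lemma σR_qR (v : ℤ × ℤ) (c : ℤ) :
    σR K v (qR K lam μ p c) = qR K lam μ p (c + v.1 * lam + v.2 * μ) := by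
  rw [σR, RingAut.mul_apply, RingAut.zpow_apply_of_apply_eq _ _ _ (σyR_qR K lam μ p),
    RingAut.zpow_apply_of_apply_eq _ _ _ (σxR_qR K lam μ p)]
  ring_nf

lemma natDegree_zR [CharZero K] (hμ : μ ≠ 0) (c : ℤ) : (zR K lam μ c).natDegree = 1 :=
  natDegree_linear (by exact_mod_cast hμ)

lemma qR_eq_comp (c : ℤ) : qR K lam μ p c = (p.map (C : K →+* K[X])).comp (zR K lam μ c) := by
  rw [qR, comp_eq_aeval, aeval_def, aeval_def, eval₂_map]; rfl

lemma natDegree_qR [CharZero K] (hμ : μ ≠ 0) (c : ℤ) :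
    (qR K lam μ p c).natDegree = p.natDegree := by
  rw [qR_eq_comp, natDegree_comp, natDegree_zR K lam μ hμ, mul_one,
    natDegree_map_eq_of_injective C_injective]

lemma leadingCoeff_qR [CharZero K] (hμ : μ ≠ 0) (c : ℤ) :
    (qR K lam μ p c).leadingCoeff = C p.leadingCoeff * (μ : K[X]) ^ p.natDegree := by
  rw [qR_eq_comp, leadingCoeff_comp (by rw [natDegree_zR K lam μ hμ]; exact one_ne_zero),
    leadingCoeff_map_of_injective C_injective, natDegree_map_eq_of_injective C_injective, zR,
    leadingCoeff_linear (by exact_mod_cast hμ)]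

def bivariateSubst (u v : Rxy K) : Rxy K →ₐ[K] Rxy K := aevalTower (aeval u) v

lemma bivariateSubst_C (u v : Rxy K) (w : K[X]) : bivariateSubst K u v (C w) = aeval u w :=
  aevalTower_C _ _ _

lemma bivariateSubst_X (u v : Rxy K) : bivariateSubst K u v X = v := aevalTower_X _ _

lemma bivariateSubst_comp_eq_id {u v u' v' : Rxy K} (hu : bivariateSubst K u v u' = C X)
    (hv : bivariateSubst K u v v' = X) :
    (bivariateSubst K u v).comp (bivariateSubst K u' v') = AlgHom.id K (Rxy K) := by
  refine algHom_ext' (algHom_ext ?_) ?_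
  · simpa [bivariateSubst_C] using hu
  · simpa [bivariateSubst_X] using hv

end Primes

section ChangeOfVars

variable (K : Type*) [Field K] (lam μ α β : ℤ) (p : K[X])

/-- The `K`-automorphism `x ↦ λx + μy`, `y ↦ αy - βx` of `K[x,y]`, with inverse
`x ↦ αx - μy`, `y ↦ βx + λy`. -/
def changeOfVars (hbez : α * lam + β * μ = 1) : Rxy K ≃ₐ[K] Rxy K :=
  have hb : (α : Rxy K) * lam + β * μ = 1 := by exact_mod_cast congrArg (Int.cast (R := Rxy K)) hbez
  AlgEquiv.ofAlgHom (bivariateSubst K (zR K lam μ 0) (C (α : K[X]) * X - C ((β : K[X]) * X)))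
    (bivariateSubst K (C ((α : K[X]) * X) - C (μ : K[X]) * X)
      (C (lam : K[X]) * X + C ((β : K[X]) * X)))
    (bivariateSubst_comp_eq_id K
      (by simp [bivariateSubst_C, bivariateSubst_X, zR]; linear_combination (C X) * hb)
      (by simp [bivariateSubst_C, bivariateSubst_X, zR]; linear_combination X * hb))
    (bivariateSubst_comp_eq_id K
      (by simp [bivariateSubst_C, bivariateSubst_X, zR]; linear_combination (C X) * hb)
      (by simp [bivariateSubst_C, bivariateSubst_X]; linear_combination X * hb))

lemma changeOfVars_C_taylor (hbez : α * lam + β * μ = 1) (c : ℤ) :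
    changeOfVars K lam μ α β hbez (C (taylor (c : K) p)) = qR K lam μ p c := by
  rw [changeOfVars, AlgEquiv.ofAlgHom_apply, bivariateSubst_C, taylor_apply, aeval_comp, qR]
  congr 2
  simp [zR, add_assoc]

variable {lam μ p}

lemma qR_prime (hcop : IsCoprime lam μ) (hp : Irreducible p) (c : ℤ) : Prime (qR K lam μ p c) := by
  obtain ⟨α, β, hbez⟩ := hcop
  rw [← changeOfVars_C_taylor K lam μ α β p hbez, MulEquiv.prime_iff, prime_C_iff]
  exact (MulEquiv.prime_iff (taylorEquiv (c : K))).mpr hp.prime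

lemma eq_of_qR_dvd [CharZero K] (hμ : μ ≠ 0) (hcop : IsCoprime lam μ) (hp : Irreducible p)
    {c c' : ℤ} (h : qR K lam μ p c ∣ qR K lam μ p c') : c = c' := by
  have heq : qR K lam μ p c = qR K lam μ p c' := eq_of_dvd_of_natDegree_le_of_leadingCoeff h
    (by rw [natDegree_qR K lam μ p hμ, natDegree_qR K lam μ p hμ])
    (by rw [leadingCoeff_qR K lam μ p hμ, leadingCoeff_qR K lam μ p hμ])
  obtain ⟨α, β, hbez⟩ := hcop
  rw [← changeOfVars_C_taylor K lam μ α β p hbez, ← changeOfVars_C_taylor K lam μ α β p hbez] at heq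
  have htaylor : taylor (c : K) p = taylor (c' : K) p :=
    C_injective ((changeOfVars K lam μ α β hbez).injective heq)
  have hperiodic : taylor (-(c' : K) + c) p = p := by
    rw [← taylor_taylor, htaylor, taylor_taylor, neg_add_cancel, taylor_zero]
  by_contra hne
  refine hp.natDegree_pos.ne' (natDegree_eq_zero_of_taylor_eq_self ?_ hperiodic)
  rw [neg_add_eq_sub, sub_ne_zero]
  exact_mod_cast hne

lemma qR_not_dvd_of_degree_lt [CharZero K] (hμ : μ ≠ 0) {e : Rxy K} (he : e ≠ 0)
    (hdeg : e.degree < p.natDegree) (c : ℤ) : ¬ qR K lam μ p c ∣ e := fun h =>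
  ((natDegree_lt_iff_degree_lt he).mpr hdeg).not_ge
    (natDegree_qR K lam μ p hμ c ▸ natDegree_le_of_dvd h he)

end ChangeOfVars

section Kernel

variable (K : Type*) [Field K] (lam μ : ℤ) (p : K[X]) (k : ℕ)

def qInvPow (c : ℤ) : Fxy K := (ι₀ K (qR K lam μ p c) ^ k)⁻¹

lemma σv_qInvPow (v : ℤ × ℤ) (c : ℤ) :
    σv K v (qInvPow K lam μ p k c) = qInvPow K lam μ p k (c + v.1 * lam + v.2 * μ) := by
  rw [qInvPow, qInvPow, map_inv₀, map_pow, σv_ι₀, σR_qR]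

lemma τF_zpow_qInvPow {α β : ℤ} (hbez : α * lam + β * μ = 1) (i c : ℤ) :
    (τF K α β ^ i) (qInvPow K lam μ p k c) = qInvPow K lam μ p k (c + i) := by
  rw [τF_zpow, σv_qInvPow]
  congr 1
  linear_combination i * hbez

lemma qInvPow_zero :
    qInvPow K lam μ p k 0 = (eval₂ (ιK K) ((lam : Fxy K) * xF K + (μ : Fxy K) * yF K) p ^ k)⁻¹ := by
  rw [qInvPow, qR, aeval_def, hom_eval₂]
  congr 3
  simp [zR, xF, yF, ιx₀, add_comm]

end Kernel

section Operators

variable (K : Type*) [Field K] (α β lam μ : ℤ)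

lemma applyA_mulA (L N : OpA K) (f : Fxy K) :
    applyA K (mulA K L N) f = applyA K L (applyA K N f) := by
  simp only [applyA, mulA]
  rw [Finsupp.sum_sum_index (fun _ => zero_mul _) (fun _ _ _ => add_mul _ _ _)]
  refine Finsupp.sum_congr fun v _ => ?_
  rw [Finsupp.sum_sum_index (fun _ => zero_mul _) (fun _ _ _ => add_mul _ _ _), map_finsuppSum,
    Finsupp.mul_sum]
  refine Finsupp.sum_congr fun w _ => ?_
  rw [Finsupp.sum_single_index (zero_mul _), σv_add, RingAut.mul_apply, map_mul, mul_assoc]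

lemma applyA_ιB (M : OpB K) (f : Fxy K) : applyA K (ιB K α β M) f = applyB K α β M f := by
  rw [ιB, applyA, Finsupp.sum_mapDomain_index (fun _ => zero_mul _) (fun _ _ _ => add_mul _ _ _)]
  exact Finsupp.sum_congr fun i _ => by rw [τF_zpow]

lemma applyB_φB (P : OpA K) {g : Fxy K}
    (hg : ∀ v : ℤ × ℤ, σv K v g = (τF K α β ^ (v.1 * lam + v.2 * μ)) g) :
    applyB K α β (φB K lam μ P) g = applyA K P g := by
  rw [φB, applyB, Finsupp.sum_mapDomain_index (fun _ => zero_mul _) (fun _ _ _ => add_mul _ _ _)]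
  exact Finsupp.sum_congr fun v _ => by rw [hg]

lemma applyA_SyOne (h : Fxy K) : applyA K (SyOne K) h = σyF K h - h := by
  simp [SyOne, applyA, Finsupp.sum_sub_index, sub_mul, σv]

lemma applyB_sub (M N : OpB K) (f : Fxy K) :
    applyB K α β (M - N) f = applyB K α β M f - applyB K α β N f :=
  Finsupp.sum_sub_index fun _ _ _ => sub_mul _ _ _

lemma mulA_add (L N N' : OpA K) : mulA K L (N + N') = mulA K L N + mulA K L N' := by
  rw [mulA, mulA, mulA, ← Finsupp.sum_add]
  exact Finsupp.sum_congr fun v _ =>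
    Finsupp.sum_add_index' (fun _ => by simp) (fun _ _ _ => by simp [mul_add])

lemma mulA_single_single (v w : ℤ × ℤ) (a b : Fxy K) :
    mulA K (Finsupp.single v a) (Finsupp.single w b) = Finsupp.single (v + w) (a * σv K v b) := by
  simp [mulA]

lemma mulA_sub_left (L L' N : OpA K) : mulA K (L - L') N = mulA K L N - mulA K L' N :=
  Finsupp.sum_sub_index fun _ _ _ => by simp [sub_mul, Finsupp.sum_sub]

lemma odot_add (L : OpA K) (M N : OpB K) :
    odot K α β lam μ L (M + N) = odot K α β lam μ L M + odot K α β lam μ L N := by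
  simp only [odot, ιB, φB, Finsupp.mapDomain_add, mulA_add]

def odotHom (L : OpA K) : OpB K →+ OpB K :=
  AddMonoidHom.mk' (odot K α β lam μ L) (odot_add K α β lam μ L)

variable {α β lam μ}

lemma odot_SyOne_single (hbez : α * lam + β * μ = 1) (i : ℤ) (b : Fxy K) :
    odot K α β lam μ (SyOne K) (Finsupp.single i b) =
      Finsupp.single (i + μ) (σyF K b) - Finsupp.single i b := by
  have hσ01 : σv K (0, 1) = σyF K := by simp [σv]
  have hσ00 : σv K (0, 0) = 1 := by simp [σv]
  simp only [odot, ιB, SyOne, Finsupp.mapDomain_single, mulA_sub_left, mulA_single_single, φB,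
    Finsupp.mapDomain_sub, hσ01, hσ00, one_mul, RingAut.one_apply]
  congr 2 <;> simp <;> linear_combination i * hbez

end Operators

section Reduction

variable (K : Type*) [Field K] {α β lam μ : ℤ} (p : K[X]) (k : ℕ)

lemma applyB_odot_qInvPow (hbez : α * lam + β * μ = 1) (L : OpA K) (N : OpB K) :
    applyB K α β (odot K α β lam μ L N) (qInvPow K lam μ p k 0) =
      applyA K L (applyB K α β N (qInvPow K lam μ p k 0)) := by
  rw [odot, applyB_φB K α β lam μ _ fun v => ?_, applyA_mulA, applyA_ιB]
  rw [σv_qInvPow, τF_zpow_qInvPow K lam μ p k hbez, zero_add, zero_add]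

lemma applyB_odot_SyOne_qInvPow (hbez : α * lam + β * μ = 1) (Q : OpB K) :
    applyB K α β (odot K α β lam μ (SyOne K) Q) (qInvPow K lam μ p k 0) =
      σyF K (applyB K α β Q (qInvPow K lam μ p k 0)) - applyB K α β Q (qInvPow K lam μ p k 0) := by
  rw [applyB_odot_qInvPow K p k hbez, applyA_SyOne]

lemma applyB_qInvPow (hbez : α * lam + β * μ = 1) (N : OpB K) :
    applyB K α β N (qInvPow K lam μ p k 0) = ∑ j ∈ N.support, N j * qInvPow K lam μ p k j :=
  Finset.sum_congr rfl fun j _ => by dsimp only; rw [τF_zpow_qInvPow K lam μ p k hbez, zero_add]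

def reduceMod (μ : ℤ) (P : OpB K) : OpB K :=
  P.sum fun j a => Finsupp.single (j % μ) ((σyF K ^ (-(j / μ))) a)

lemma single_sub_single_mem_range (hbez : α * lam + β * μ = 1) (i n : ℤ) (b : Fxy K) :
    Finsupp.single (i + n * μ) ((σyF K ^ n) b) - Finsupp.single i b ∈
      (odotHom K α β lam μ (SyOne K)).range := by
  have step : ∀ m : ℤ, Finsupp.single (i + (m + 1) * μ) ((σyF K ^ (m + 1)) b) -
      Finsupp.single (i + m * μ) ((σyF K ^ m) b) ∈ (odotHom K α β lam μ (SyOne K)).range :=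
    fun m => ⟨Finsupp.single (i + m * μ) ((σyF K ^ m) b), by
      rw [odotHom, AddMonoidHom.mk'_apply, odot_SyOne_single K hbez, add_comm m, zpow_one_add,
        RingAut.mul_apply, show i + (1 + m) * μ = i + m * μ + μ by ring]⟩
  induction n using Int.induction_on with
  | zero => simp
  | succ n ih => rw [← sub_add_sub_cancel]; exact add_mem (step n) ih
  | pred n ih =>
    have h := sub_mem ih (step (-n - 1))
    rwa [sub_add_cancel, sub_sub_sub_cancel_left] at h

lemma sub_reduceMod_mem_range (hbez : α * lam + β * μ = 1) (P : OpB K) :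
    P - reduceMod K μ P ∈ (odotHom K α β lam μ (SyOne K)).range := by
  nth_rewrite 1 [← Finsupp.sum_single P]
  rw [reduceMod, ← Finsupp.sum_sub]
  refine sum_mem fun j _ => ?_
  dsimp only
  have h := single_sub_single_mem_range K hbez (j % μ) (j / μ) ((σyF K ^ (-(j / μ))) (P j))
  rwa [← RingAut.mul_apply, ← zpow_add, add_neg_cancel, zpow_zero, RingAut.one_apply,
    Int.emod_add_ediv_mul] at h

lemma reduceMod_apply_eq_zero (hμ : 0 < μ) (P : OpB K) {r : ℤ} (hr : ¬ (0 ≤ r ∧ r < μ)) :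
    reduceMod K μ P r = 0 := by
  rw [reduceMod, Finsupp.sum_apply]
  refine Finset.sum_eq_zero fun j _ => Finsupp.single_eq_of_ne fun h => hr ?_
  exact h ▸ ⟨Int.emod_nonneg j hμ.ne', Int.emod_lt_of_pos j hμ⟩

end Reduction

section ProperFractions

variable (K : Type*) [Field K]

/-- The fractions `a/b` with `deg_y a < d` and `b ∈ K[x] \ {0}` (that is, `degree b = 0`). -/
def properFractions (d : ℕ) : AddSubgroup (Fxy K) where
  carrier := {h | ∃ a b : Rxy K, b.degree = 0 ∧ a.degree < d ∧ h = ι₀ K a / ι₀ K b}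
  zero_mem' := ⟨0, 1, degree_one, by simp, by simp⟩
  add_mem' := by
    rintro _ _ ⟨a, b, hb, ha, rfl⟩ ⟨a', b', hb', ha', rfl⟩
    have ne_zero : ∀ {b : Rxy K}, b.degree = 0 → ι₀ K b ≠ 0 := fun hb =>
      (map_ne_zero_iff _ (IsFractionRing.injective (Rxy K) (Fxy K))).mpr (by rintro rfl; simp at hb)
    refine ⟨a * b' + a' * b, b * b', by rw [degree_mul, hb, hb', zero_add],
      (degree_add_le _ _).trans_lt (max_lt ?_ ?_), ?_⟩
    · rwa [degree_mul, hb', add_zero]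
    · rwa [degree_mul, hb, add_zero]
    · rw [div_add_div _ _ (ne_zero hb) (ne_zero hb')]
      simp only [map_add, map_mul, mul_comm]
  neg_mem' := by
    rintro _ ⟨a, b, hb, ha, rfl⟩
    exact ⟨-a, b, hb, by rwa [degree_neg], by rw [map_neg, neg_div]⟩

variable {K} {d : ℕ}

lemma div_ιx₀_mem_properFractions {a : Rxy K} {u : K[X]} (hu : u ≠ 0) (ha : a.degree < d) :
    ι₀ K a / ιx₀ K u ∈ properFractions K d :=
  ⟨a, C u, degree_C hu, ha, rfl⟩

lemma ιx₀_mul_mem_properFractions (c : K[X]) {h : Fxy K} (hh : h ∈ properFractions K d) :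
    ιx₀ K c * h ∈ properFractions K d := by
  obtain ⟨a, b, hb, ha, rfl⟩ := hh
  exact ⟨c • a, b, hb, (degree_smul_le c a).trans_lt ha,
    by rw [smul_eq_C_mul, map_mul, mul_div_assoc]; rfl⟩

lemma σv_mem_properFractions (v : ℤ × ℤ) {h : Fxy K} (hh : h ∈ properFractions K d) :
    σv K v h ∈ properFractions K d := by
  obtain ⟨a, b, hb, ha, rfl⟩ := hh
  exact ⟨σR K v a, σR K v b, by rwa [degree_σR], by rwa [degree_σR],
    by rw [map_div₀, σv_ι₀, σv_ι₀]⟩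

lemma mulA_apply_mem_properFractions {L N : OpA K} (hL : ∀ v, L v ∈ (ιx₀ K).range)
    (hN : ∀ w, N w ∈ properFractions K d) (r : ℤ × ℤ) : mulA K L N r ∈ properFractions K d := by
  rw [mulA, Finsupp.sum_apply]
  refine sum_mem fun v _ => Finsupp.sum_single_apply_mem _ _ _ (fun w _ => ?_) r
  obtain ⟨c, hc⟩ := hL v
  rw [← hc]
  exact ιx₀_mul_mem_properFractions c (σv_mem_properFractions v (hN w))

lemma odot_ιxOp_apply_mem_properFractions (α β lam μ : ℤ) (L : ℕ →₀ K[X]) {M : OpB K}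
    (hM : ∀ i, M i ∈ properFractions K d) (j : ℤ) :
    odot K α β lam μ (ιxOp K L) M j ∈ properFractions K d := by
  refine Finsupp.mapDomain_apply_mem _ (mulA_apply_mem_properFractions (fun v => ?_)
    (Finsupp.mapDomain_apply_mem _ hM)) j
  exact Finsupp.sum_single_apply_mem (S := (ιx₀ K).range.toAddSubgroup) L _ _
    (fun ℓ _ => ⟨L ℓ, rfl⟩) v

lemma reduceMod_apply_mem_properFractions (μ : ℤ) {P : OpB K}
    (hP : ∀ j, P j ∈ properFractions K d) (r : ℤ) : reduceMod K μ P r ∈ properFractions K d :=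
  Finsupp.sum_single_apply_mem _ _ _ (fun j _ => by
    rw [← σv_zero_fst]; exact σv_mem_properFractions _ (hP j)) r

end ProperFractions

section Vanishing

variable {K : Type*} [Field K] {lam μ : ℤ} {p : K[X]} (k : ℕ)

lemma div_mul_qInvPow (a b : Rxy K) (r : ℤ) :
    ι₀ K a / ι₀ K b * qInvPow K lam μ p k r = ι₀ K a / ι₀ K (b * qR K lam μ p r ^ k) := by
  rw [qInvPow, ← div_eq_mul_inv, div_div, map_mul, map_pow]

variable [CharZero K]

lemma mul_qInvPow_mem_regularAt (hμ : μ ≠ 0) (hcop : IsCoprime lam μ) (hp : Irreducible p)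
    {h : Fxy K} (hh : h ∈ properFractions K p.natDegree) {c r : ℤ} (hcr : c ≠ r) :
    h * qInvPow K lam μ p k r ∈ regularAt (qR_prime K hcop hp c) := by
  obtain ⟨a, b, hb, -, rfl⟩ := hh
  rw [div_mul_qInvPow]
  refine div_mem_regularAt _ fun hdvd => ?_
  rcases (qR_prime K hcop hp c).dvd_or_dvd hdvd with hdvd | hdvd
  · refine qR_not_dvd_of_degree_lt K hμ (by rintro rfl; simp at hb) ?_ c hdvd
    rw [hb]
    exact_mod_cast hp.natDegree_pos
  · exact hcr (eq_of_qR_dvd K hμ hcop hp ((qR_prime K hcop hp c).dvd_of_dvd_pow hdvd))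

lemma mul_qInvPow_notMem_regularAt (hμ : μ ≠ 0) (hcop : IsCoprime lam μ) (hp : Irreducible p)
    (hk : 0 < k) {h : Fxy K} (hh : h ∈ properFractions K p.natDegree) (h0 : h ≠ 0) (r : ℤ) :
    h * qInvPow K lam μ p k r ∉ regularAt (qR_prime K hcop hp r) := by
  obtain ⟨a, b, hb, ha, rfl⟩ := hh
  have ha0 : a ≠ 0 := by rintro rfl; simp at h0
  rw [div_mul_qInvPow]
  exact div_mul_pow_notMem_regularAt _ (qR_not_dvd_of_degree_lt K hμ ha0 ha r)
    (by rintro rfl; simp at hb) hk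

theorem eq_zero_of_isSummableY (hμ : 0 < μ) (hcop : IsCoprime lam μ) (hp : Irreducible p)
    (hk : 0 < k) {R : OpB K} (hR : ∀ r, R r ∈ properFractions K p.natDegree)
    (hsupp : ∀ r ∈ R.support, 0 ≤ r ∧ r < μ)
    (hsum : IsSummableY K (∑ r ∈ R.support, R r * qInvPow K lam μ p k r)) : R = 0 := by
  by_contra hR0
  obtain ⟨r0, hr0⟩ := Finsupp.ne_iff.mp hR0
  have hr0supp : r0 ∈ R.support := Finsupp.mem_support_iff.mpr hr0
  obtain ⟨h, hh⟩ := hsum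
  let V : ℤ → AddSubgroup (Fxy K) := fun c => regularAt (qR_prime K hcop hp (r0 + c * μ))
  have hterm : ∀ c, ∀ r ∈ R.support, r ≠ r0 + c * μ → R r * qInvPow K lam μ p k r ∈ V c :=
    fun c r _ hr => mul_qInvPow_mem_regularAt k hμ.ne' hcop hp (hR r) (Ne.symm hr)
  have hw : ∀ c ≠ 0, ∑ r ∈ R.support, R r * qInvPow K lam μ p k r ∈ V c := by
    refine fun c hc => sum_mem fun r hr => hterm c r hr fun heq => ?_
    obtain ⟨h1, h2⟩ := hsupp r hr
    obtain ⟨h3, h4⟩ := hsupp r0 hr0supp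
    rcases lt_or_gt_of_ne hc with hc | hc <;> nlinarith
  have hσ : ∀ c g, σyF K g ∈ V (c + 1) ↔ g ∈ V c := fun c g =>
    map_mem_regularAt_iff _ (σyR K) _ (by rw [σyR_qR]; ring_nf) g
  have hfin : ∀ g, {c | g ∉ V c}.Finite := by
    intro g
    obtain ⟨a, b, hb, rfl⟩ := IsFractionRing.div_surjective (A := Rxy K) g
    refine (UniqueFactorizationMonoid.finite_setOf_dvd (f := fun c => qR K lam μ p (r0 + c * μ))
      (fun c => (qR_prime K hcop hp _).irreducible) (fun c c' hcc' => ?_)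
      (nonZeroDivisors.ne_zero hb)).subset fun c hc => ?_
    · exact mul_right_cancel₀ hμ.ne' (add_left_cancel (eq_of_qR_dvd K hμ.ne' hcop hp hcc'))
    · by_contra hdvd
      exact hc (div_mem_regularAt _ hdvd)
  have hw0 := mem_zero_of_eq_apply_sub V (σyF K) hσ hfin hw hh
  rw [← Finset.add_sum_erase _ _ hr0supp] at hw0
  have hrest := sum_mem fun r hr => hterm 0 r (Finset.mem_of_mem_erase hr)
    (by simpa using Finset.ne_of_mem_erase hr)
  have := sub_mem hw0 hrest
  simp only [add_sub_cancel_right, V, zero_mul, add_zero] at this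
  exact mul_qInvPow_notMem_regularAt k hμ.ne' hcop hp hk (hR r0) hr0 r0 this

theorem exists_eq_odot_SyOne_of_isSummableY {α β : ℤ} (hμ : 0 < μ) (hbez : α * lam + β * μ = 1)
    (hp : Irreducible p) (hk : 0 < k) {P : OpB K} (hP : ∀ j, P j ∈ properFractions K p.natDegree)
    (hsum : IsSummableY K (applyB K α β P (qInvPow K lam μ p k 0))) :
    ∃ Q : OpB K, P = odot K α β lam μ (SyOne K) Q := by
  obtain ⟨Q, hQ⟩ := sub_reduceMod_mem_range K hbez P
  obtain ⟨g, hg⟩ := hsum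
  have hred : reduceMod K μ P = 0 := by
    refine eq_zero_of_isSummableY k hμ ⟨α, β, hbez⟩ hp hk
      (reduceMod_apply_mem_properFractions μ hP) (fun r hr => by_contra fun h =>
        Finsupp.mem_support_iff.mp hr (reduceMod_apply_eq_zero K hμ P h))
      ⟨g - applyB K α β Q (qInvPow K lam μ p k 0), ?_⟩
    rw [← applyB_qInvPow K p k hbez, ← sub_sub_self P (reduceMod K μ P), applyB_sub, ← hQ,
      odotHom, AddMonoidHom.mk'_apply, applyB_odot_SyOne_qInvPow K p k hbez, hg, map_sub]
    abel
  exact ⟨Q, by rw [← sub_zero P, ← hred]; exact hQ.symm⟩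

end Vanishing

end

theorem statement8_general (K : Type*) [Field K] [CharZero K]
    (lam μ α β : ℤ) (hμ : 0 < μ)
    (hbez : α * lam + β * μ = 1)
    (k : ℕ) (hk : 0 < k)
    (p : Polynomial K) (hpirr : Irreducible p)
    (M : OpB K)
    (hM : ∀ i : ℤ, ∃ (a : Rxy K) (u : Polynomial K), u ≠ 0 ∧
        M i = ι₀ K a / ιx₀ K u ∧ a.degree < p.degree)
    (f : Fxy K)
    (hf : f = applyB K α β M
        ((Polynomial.eval₂ (ιK K) ((lam : Fxy K) * xF K + (μ : Fxy K) * yF K) p ^ k)⁻¹))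
    (L : ℕ →₀ Polynomial K) (hL : L ≠ 0) :
    (IsTelescoper K L f ↔
        ∃ Q : OpB K,
          odot K α β lam μ (ιxOp K L) M = odot K α β lam μ (SyOne K) Q) ∧
      (∀ Q : OpB K,
        odot K α β lam μ (ιxOp K L) M = odot K α β lam μ (SyOne K) Q →
          applyA K (ιxOp K L) f =
            σyF K (applyB K α β Q
              ((Polynomial.eval₂ (ιK K) ((lam : Fxy K) * xF K + (μ : Fxy K) * yF K) p ^ k)⁻¹)) -
            applyB K α β Q
              ((Polynomial.eval₂ (ιK K) ((lam : Fxy K) * xF K + (μ : Fxy K) * yF K) p ^ k)⁻¹)) := by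
  rw [← qInvPow_zero] at hf ⊢
  have hLf : applyA K (ιxOp K L) f =
      applyB K α β (odot K α β lam μ (ιxOp K L) M) (qInvPow K lam μ p k 0) := by
    rw [hf, applyB_odot_qInvPow K p k hbez]
  have certificate : ∀ Q : OpB K,
      odot K α β lam μ (ιxOp K L) M = odot K α β lam μ (SyOne K) Q →
      applyA K (ιxOp K L) f = σyF K (applyB K α β Q (qInvPow K lam μ p k 0)) -
        applyB K α β Q (qInvPow K lam μ p k 0) := fun Q hQ => by
    rw [hLf, hQ, applyB_odot_SyOne_qInvPow K p k hbez]
  refine ⟨⟨fun ⟨_, hsum⟩ => ?_, fun ⟨Q, hQ⟩ => ⟨hL, _, certificate Q hQ⟩⟩, certificate⟩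
  have hMproper : ∀ i, M i ∈ properFractions K p.natDegree := fun i => by
    obtain ⟨a, u, hu, hMi, ha⟩ := hM i
    exact hMi ▸ div_ιx₀_mem_properFractions hu (degree_eq_natDegree hpirr.ne_zero ▸ ha)
  rw [hLf] at hsum
  exact exists_eq_odot_SyOne_of_isSummableY k hμ hbez hpirr hk
    (odot_ιxOp_apply_mem_properFractions α β lam μ L hMproper) hsum

/-- Proposition `PROP:basiccriterion`.
Let `f = M(1/p(λx + μy)^k)`, where `(λ,μ)` is a pair of coprime integers with `μ > 0`,
`k > 0`, `p ∈ K[z]` is monic and irreducible, and `M = Σ_i a_i S_{λ,μ}^i` with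
`a_i ∈ K(x)[y]`, finitely many nonzero, and `deg_y(a_i) < deg_z(p)`.  Let
`L ∈ K[x][S_x]` be a nonzero operator.  Then `L` is a telescoper for `f` if and only if
there exists `Q ∈ A_{λ,μ}` such that `L ⊙ M = (S_y − 1) ⊙ Q`; and when this is the
case, `Q(1/p(λx + μy)^k)` is a certificate corresponding to `L`. -/
theorem statement8 (K : Type*) [Field K] [CharZero K]
    (lam μ α β : ℤ) (hμ : 0 < μ) (hcop : IsCoprime lam μ)
    (hbez : α * lam + β * μ = 1) (hα : 0 ≤ α ∧ α < μ)
    (hβ : lam ≠ 0 → |β| ≤ |lam|) (hβ0 : lam = 0 → α = 0 ∧ β = 1)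
    (k : ℕ) (hk : 0 < k)
    (p : Polynomial K) (hp : p.Monic) (hpirr : Irreducible p)
    (M : OpB K)
    (hM : ∀ i : ℤ, ∃ (a : Rxy K) (u : Polynomial K), u ≠ 0 ∧
        M i = ι₀ K a / ιx₀ K u ∧ a.degree < p.degree)
    (f : Fxy K)
    (hf : f = applyB K α β M
        ((Polynomial.eval₂ (ιK K) ((lam : Fxy K) * xF K + (μ : Fxy K) * yF K) p ^ k)⁻¹))
    (L : ℕ →₀ Polynomial K) (hL : L ≠ 0) :
    (IsTelescoper K L f ↔
        ∃ Q : OpB K,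
          odot K α β lam μ (ιxOp K L) M = odot K α β lam μ (SyOne K) Q) ∧
      (∀ Q : OpB K,
        odot K α β lam μ (ιxOp K L) M = odot K α β lam μ (SyOne K) Q →
          applyA K (ιxOp K L) f =
            σyF K (applyB K α β Q
              ((Polynomial.eval₂ (ιK K) ((lam : Fxy K) * xF K + (μ : Fxy K) * yF K) p ^ k)⁻¹)) -
            applyB K α β Q
              ((Polynomial.eval₂ (ιK K) ((lam : Fxy K) * xF K + (μ : Fxy K) * yF K) p ^ k)⁻¹)) :=
  statement8_general K lam μ α β hμ hbez k hk p hpirr M hM f hf L hL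
end
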